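/- Let X and Y be normed linear spaces, F : X ⇒ Y a set-valued mapping, and (x̄,ȳ) ∈ gph F. If (0,0) ∉ Cr₀F(x̄,ȳ), then lim_{ρ↓0} inf{ max{ |∂F|^a_ρ(x,y), ‖y−ȳ‖/‖x−x̄‖ } : (x,y) ∈ gph F, x ∉ F⁻¹(ȳ), ‖x−x̄‖ < ρ, ‖y−ȳ‖ < ρ } > 0. -/

import Mathlib

open Filter Metric Topology ENNReal

variable {X Y : Type*} [NormedAddCommGroup X] [NormedSpace ℝ X]
  [NormedAddCommGroup Y] [NormedSpace ℝ Y]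

/-- The Fréchet normal cone to `Ω` at `p` (empty when `p ∉ Ω`), in the equivalent ε-form. -/
def frNormalCone {E : Type*} [NormedAddCommGroup E] [NormedSpace ℝ E]
    (Ω : Set E) (p : E) : Set (E →L[ℝ] ℝ) :=
  {l | p ∈ Ω ∧ ∀ ε : ℝ, 0 < ε → ∀ᶠ q in 𝓝[Ω \ {p}] p, l (q - p) ≤ ε * ‖q - p‖}

/-- The Fréchet coderivative of `F` at `(x,y) ∈ gph F`:
`D*F(x,y)(y*) := {x* : (x*,−y*) ∈ N_{gph F}(x,y)}`. -/
def coderiv (F : X → Set Y) (x : X) (y : Y) (q : Y →L[ℝ] ℝ) : Set (X →L[ℝ] ℝ) :=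
  {l | l.coprod (-q) ∈ frNormalCone {p : X × Y | p.2 ∈ F p.1} (x, y)}

/-- The duality mapping `J(v) := {y* : ‖y*‖ = 1, ⟨y*,v⟩ = ‖v‖}`. -/
def dualityMap (v : Y) : Set (Y →L[ℝ] ℝ) := {q | ‖q‖ = 1 ∧ q v = ‖v‖}

/-- The approximate subdifferential ρ-slope of `F` at `(x,y) ∈ gph F` (for `y ≠ ȳ`):
`|∂F|^a_ρ(x,y) := liminf_{v→y−ȳ} inf {‖x*‖ : x* ∈ D*F(x,y)(J(v) + ρB*)}` (`inf ∅ = +∞`). -/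
noncomputable def aSdSlopeF (F : X → Set Y) (y₀ : Y) (ρ : ℝ) (x : X) (y : Y) : ℝ≥0∞ :=
  Filter.liminf
    (fun v : Y =>
      ⨅ (l : X →L[ℝ] ℝ)
        (_ : ∃ q j : Y →L[ℝ] ℝ, j ∈ dualityMap v ∧ ‖q - j‖ ≤ ρ ∧ l ∈ coderiv F x y q),
          (‖l‖₊ : ℝ≥0∞))
    (𝓝 (y - y₀))

/-- The limit set `Cr₀F(x̄,ȳ)`: all `(v,x*) ∈ Y × X*` for which there exist sequences
`t_k ↓ 0`, `(v_k, x_k*) → (v, x*)` and `(u_k, y_k*) ∈ S_X × S_{Y*}` such that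
`x_k* ∈ D*F(x̄ + t_k u_k, ȳ + t_k v_k)(y_k*)` for all `k`. -/
def Cr0 (F : X → Set Y) (x₀ : X) (y₀ : Y) : Set (Y × (X →L[ℝ] ℝ)) :=
  {w | ∃ (t : ℕ → ℝ) (v : ℕ → Y) (l : ℕ → X →L[ℝ] ℝ) (u : ℕ → X) (q : ℕ → Y →L[ℝ] ℝ),
    (∀ k, 0 < t k) ∧ Tendsto t atTop (𝓝 0) ∧
    Tendsto v atTop (𝓝 w.1) ∧ Tendsto l atTop (𝓝 w.2) ∧
    ∀ k, ‖u k‖ = 1 ∧ ‖q k‖ = 1 ∧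
      l k ∈ coderiv F (x₀ + t k • u k) (y₀ + t k • v k) (q k)}

/-! If the limit were zero, then for every small `ε` some graph point `(x, y)` with
`‖x - x̄‖ < ε` and `‖y - ȳ‖ < ε ‖x - x̄‖` would carry a coderivative element `x*` with
`‖x*‖ < ε` at some `y*` with `‖y*‖ ≥ 1 - ε`. Normalising `y*` (the Fréchet normal cone is a cone)
and rescaling by `t = ‖x - x̄‖` yields sequences witnessing `(0, 0) ∈ Cr₀F(x̄, ȳ)`. -/

lemma smul_mem_frNormalCone {E : Type*} [NormedAddCommGroup E] [NormedSpace ℝ E]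
    {Ω : Set E} {p : E} {L : E →L[ℝ] ℝ} {c : ℝ} (hc : 0 < c)
    (hL : L ∈ frNormalCone Ω p) : c • L ∈ frNormalCone Ω p := by
  refine ⟨hL.1, fun ε hε => ?_⟩
  filter_upwards [hL.2 (ε / c) (div_pos hε hc)] with q hq
  calc (c • L) (q - p) = c * L (q - p) := rfl
    _ ≤ c * (ε / c * ‖q - p‖) := mul_le_mul_of_nonneg_left hq hc.le
    _ = ε * ‖q - p‖ := by field_simp

lemma smul_mem_coderiv {F : X → Set Y} {x : X} {y : Y} {q : Y →L[ℝ] ℝ}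
    {l : X →L[ℝ] ℝ} {c : ℝ} (hc : 0 < c) (hl : l ∈ coderiv F x y q) :
    c • l ∈ coderiv F x y (c • q) := by
  have hcoprod : (c • l).coprod (-(c • q)) = c • l.coprod (-q) := by
    ext <;> simp
  show _ ∈ frNormalCone _ _
  rw [hcoprod]
  exact smul_mem_frNormalCone hc hl

lemma exists_unit_coderiv_of_aSdSlopeF_lt {F : X → Set Y} {y₀ : Y} {ρ ε : ℝ} {x : X} {y : Y}
    (hρ : ρ < 1) (h : aSdSlopeF F y₀ ρ x y < ENNReal.ofReal ε) :
    ∃ (l : X →L[ℝ] ℝ) (q : Y →L[ℝ] ℝ), ‖q‖ = 1 ∧ ‖l‖ < ε / (1 - ρ) ∧ l ∈ coderiv F x y q := by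
  obtain ⟨v, hv⟩ := (frequently_lt_of_liminf_lt (h := h)).exists
  obtain ⟨l, hl⟩ := iInf_lt_iff.mp hv
  obtain ⟨⟨q, j, hj, hqj, hcod⟩, hl_lt⟩ := iInf_lt_iff.mp hl
  have hl_norm : ‖l‖ < ε := by
    rwa [← enorm_eq_nnnorm, ← ofReal_norm,
      ENNReal.ofReal_lt_ofReal_iff_of_nonneg (norm_nonneg _)] at hl_lt
  have hq : 1 - ρ ≤ ‖q‖ := by
    have := norm_sub_norm_le j q
    rw [hj.1, norm_sub_rev] at this
    linarith
  have hq_pos : 0 < ‖q‖ := by linarith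
  refine ⟨‖q‖⁻¹ • l, ‖q‖⁻¹ • q, norm_smul_inv_norm (norm_pos_iff.mp hq_pos), ?_,
    smul_mem_coderiv (inv_pos.mpr hq_pos) hcod⟩
  rw [norm_smul, norm_inv, norm_norm, inv_mul_eq_div]
  calc ‖l‖ / ‖q‖ ≤ ‖l‖ / (1 - ρ) := div_le_div_of_nonneg_left (norm_nonneg _) (by linarith) hq
    _ < ε / (1 - ρ) := div_lt_div_of_pos_right hl_norm (by linarith)

lemma mem_Cr0_of_tendsto {F : X → Set Y} {x₀ : X} {y₀ : Y} {w : Y × (X →L[ℝ] ℝ)}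
    {x : ℕ → X} {y : ℕ → Y} {l : ℕ → X →L[ℝ] ℝ} {q : ℕ → Y →L[ℝ] ℝ}
    (hx₀ : ∀ k, x k ≠ x₀) (hx : Tendsto x atTop (𝓝 x₀))
    (hy : Tendsto (fun k => ‖x k - x₀‖⁻¹ • (y k - y₀)) atTop (𝓝 w.1))
    (hl : Tendsto l atTop (𝓝 w.2)) (hq : ∀ k, ‖q k‖ = 1)
    (hcod : ∀ k, l k ∈ coderiv F (x k) (y k) (q k)) : w ∈ Cr0 F x₀ y₀ := by
  have hdist : ∀ k, ‖x k - x₀‖ ≠ 0 := fun k => norm_ne_zero_iff.mpr (sub_ne_zero.mpr (hx₀ k))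
  refine ⟨fun k => ‖x k - x₀‖, _, l, fun k => ‖x k - x₀‖⁻¹ • (x k - x₀), q,
    fun k => (hdist k).symm.lt_of_le (norm_nonneg _), tendsto_iff_norm_sub_tendsto_zero.mp hx,
    hy, hl, fun k => ⟨norm_smul_inv_norm (sub_ne_zero.mpr (hx₀ k)), hq k, ?_⟩⟩
  simpa only [smul_inv_smul₀ (hdist k), add_sub_cancel] using hcod k

noncomputable def slopeRatioInf (F : X → Set Y) (x₀ : X) (y₀ : Y) (ρ : ℝ) : ℝ≥0∞ :=
  ⨅ (p : X × Y) (_ : p.2 ∈ F p.1 ∧ y₀ ∉ F p.1 ∧ ‖p.1 - x₀‖ < ρ ∧ ‖p.2 - y₀‖ < ρ),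
    max (aSdSlopeF F y₀ ρ p.1 p.2) (ENNReal.ofReal ‖p.2 - y₀‖ / ENNReal.ofReal ‖p.1 - x₀‖)

lemma exists_coderiv_of_slopeRatioInf_lt {F : X → Set Y} {x₀ : X} {y₀ : Y} {ε : ℝ}
    (hgph : y₀ ∈ F x₀) (hε : ε < 1) (h : slopeRatioInf F x₀ y₀ ε < ENNReal.ofReal ε) :
    ∃ (x : X) (y : Y) (l : X →L[ℝ] ℝ) (q : Y →L[ℝ] ℝ), x ≠ x₀ ∧ ‖x - x₀‖ < ε ∧
      ‖‖x - x₀‖⁻¹ • (y - y₀)‖ < ε ∧ ‖q‖ = 1 ∧ ‖l‖ < ε / (1 - ε) ∧ l ∈ coderiv F x y q := by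
  obtain ⟨⟨x, y⟩, hp⟩ := iInf_lt_iff.mp h
  obtain ⟨⟨-, hy₀, hx, -⟩, hmax⟩ := iInf_lt_iff.mp hp
  obtain ⟨hslope, hratio⟩ := max_lt_iff.mp hmax
  have hx₀ : x ≠ x₀ := by rintro rfl; exact hy₀ hgph
  have hdist : 0 < ‖x - x₀‖ := norm_pos_iff.mpr (sub_ne_zero.mpr hx₀)
  obtain ⟨l, q, hq, hl, hcod⟩ := exists_unit_coderiv_of_aSdSlopeF_lt hε hslope
  refine ⟨x, y, l, q, hx₀, hx, ?_, hq, hl, hcod⟩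
  rwa [norm_smul, norm_inv, norm_norm, inv_mul_eq_div,
    ← ENNReal.ofReal_lt_ofReal_iff_of_nonneg (by positivity), ENNReal.ofReal_div_of_pos hdist]

/-- if `(0,0) ∉ Cr₀F(x̄,ȳ)`, then
`lim_{ρ↓0} inf {max {|∂F|^a_ρ(x,y), ‖y−ȳ‖/‖x−x̄‖} : (x,y) ∈ gph F, x ∉ F⁻¹(ȳ),
‖x−x̄‖ < ρ, ‖y−ȳ‖ < ρ} > 0` (the limit being a supremum by monotonicity; `inf ∅ = +∞`). -/
theorem cr0_implies_slope_pos (F : X → Set Y) (x₀ : X) (y₀ : Y)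
    (hgph : y₀ ∈ F x₀)
    (hCr : ((0 : Y), (0 : X →L[ℝ] ℝ)) ∉ Cr0 F x₀ y₀) :
    0 < ⨆ (ρ : ℝ) (_ : 0 < ρ),
        ⨅ (p : X × Y)
          (_ : p.2 ∈ F p.1 ∧ y₀ ∉ F p.1 ∧ ‖p.1 - x₀‖ < ρ ∧ ‖p.2 - y₀‖ < ρ),
            max (aSdSlopeF F y₀ ρ p.1 p.2)
              (ENNReal.ofReal ‖p.2 - y₀‖ / ENNReal.ofReal ‖p.1 - x₀‖) := by
  change 0 < ⨆ (ρ : ℝ) (_ : 0 < ρ), slopeRatioInf F x₀ y₀ ρ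
  by_contra hzero
  rw [not_lt, nonpos_iff_eq_zero] at hzero
  obtain ⟨ε, -, hε, hε_lim⟩ := exists_seq_strictAnti_tendsto' (zero_lt_one' ℝ)
  have hpoint := fun k => exists_coderiv_of_slopeRatioInf_lt hgph (hε k).2 <| by
    rw [ENNReal.iSup_eq_zero.mp (ENNReal.iSup_eq_zero.mp hzero (ε k)) (hε k).1]
    exact ENNReal.ofReal_pos.mpr (hε k).1
  choose x y l q hx₀ hx hy hq hl hcod using hpoint
  have hbound : Tendsto (fun k => ε k / (1 - ε k)) atTop (𝓝 0) := by
    have := hε_lim.div (tendsto_const_nhds.sub hε_lim) (by norm_num : (1 : ℝ) - 0 ≠ 0)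
    rwa [zero_div] at this
  refine hCr (mem_Cr0_of_tendsto hx₀ ?_ ?_ ?_ hq hcod)
  · exact tendsto_iff_norm_sub_tendsto_zero.mpr
      (squeeze_zero (fun _ => norm_nonneg _) (fun k => (hx k).le) hε_lim)
  · exact squeeze_zero_norm (fun k => (hy k).le) hε_lim
  · exact squeeze_zero_norm (fun k => (hl k).le) hbound
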